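/- arXiv:0704.2040 — 4 statements merged into one kernel-verified Lean document; each statement's English description precedes it below -/
import Mathlib

section
/- Let t ≥ 1 and let f(z,w) be a polynomial in two complex variables that is weighted homogeneous of degree 2t when z is given weight 1 and w weight 2 (i.e. f(λz,λ²w)=λ^{2t}f(z,w)). If z̄·f(z,zz̄) + z·conj(f(z,zz̄)) = 0 identically in z ∈ ℂ, then there exists a ∈ ℂ such that f(z,w) = a·w^t − ā·z²·w^{t−1}. Conversely, every f of this form satisfies the identity. -/
open Complex Polynomial

lemma eval_aeval_mv (p : MvPolynomial (Fin 2) ℂ) (g : Fin 2 → Polynomial ℂ) (x : ℂ) :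
    Polynomial.eval x (MvPolynomial.aeval g p) = MvPolynomial.eval (fun i => Polynomial.eval x (g i)) p := by
  induction p using MvPolynomial.induction_on with
  | C => simp
  | add p q hp hq => simp [hp, hq]
  | mul_X p i hp => simp [hp]

lemma circle_infinite : {u : ℂ | u * (starRingEnd ℂ) u = 1}.Infinite := by
  have hden : ∀ s : ℝ, (1 - (s:ℂ) * I) ≠ 0 := by
    intro s h
    have := congrArg Complex.re h
    simp at this
  have hden' : ∀ s : ℝ, (1 + (s:ℂ) * I) ≠ 0 := by
    intro s h
    have := congrArg Complex.re h
    simp at this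
  apply Set.infinite_of_injective_forall_mem
    (f := fun s : ℝ => (1 + (s:ℂ) * I) / (1 - (s:ℂ) * I))
  case hi =>
    intro a b hab
    simp only at hab
    rw [div_eq_div_iff (hden a) (hden b)] at hab
    have := congrArg Complex.im hab
    simp at this
    linarith
  case hf =>
    intro s
    simp only [Set.mem_setOf_eq, map_div₀, map_add, map_sub, map_one, map_mul, conj_I,
      Complex.conj_ofReal]
    rw [div_mul_div_comm, div_eq_one_iff_eq
      (mul_ne_zero (hden s) (by rw [mul_neg, sub_neg_eq_add]; exact hden' s))]
    ring

theorem bishop_even_homogeneous_solution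
    (t : ℕ) (ht : 1 ≤ t) (f : ℂ → ℂ → ℂ)
    (hpoly : ∃ p : MvPolynomial (Fin 2) ℂ, ∀ z w : ℂ, f z w = MvPolynomial.eval ![z, w] p)
    (hhom : ∀ lam z w : ℂ, f (lam * z) (lam ^ 2 * w) = lam ^ (2 * t) * f z w) :
    (∀ z : ℂ, starRingEnd ℂ z * f z (z * starRingEnd ℂ z)
        + z * starRingEnd ℂ (f z (z * starRingEnd ℂ z)) = 0)
      ↔ ∃ a : ℂ, ∀ z w : ℂ,
          f z w = a * w ^ t - starRingEnd ℂ a * z ^ 2 * w ^ (t - 1) := by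
  obtain ⟨s, rfl⟩ : ∃ s, t = s + 1 := ⟨t - 1, (Nat.succ_pred_eq_of_pos ht).symm⟩
  simp only [Nat.add_sub_cancel]
  obtain ⟨p, hp⟩ := hpoly
  constructor
  · intro h
    set G : Polynomial ℂ := MvPolynomial.aeval ![Polynomial.X, (1 : Polynomial ℂ)] p with hGdef
    have hG : ∀ u : ℂ, G.eval u = f u 1 := by
      intro u
      rw [hGdef, eval_aeval_mv, hp,
        show (fun i => Polynomial.eval u (![Polynomial.X, (1 : Polynomial ℂ)] i)) = ![u, (1:ℂ)]
          from by funext i; fin_cases i <;> simp]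
    set n := G.natDegree + 2 with hn
    set H : Polynomial ℂ := ∑ k ∈ Finset.range (n+1),
        (Polynomial.C (G.coeff k) * Polynomial.X ^ (n + k)
          + Polynomial.C ((starRingEnd ℂ) (G.coeff k)) * Polynomial.X ^ (n + 2 - k)) with hH
    have hGe : ∀ u : ℂ, G.eval u = ∑ k ∈ Finset.range (n+1), G.coeff k * u ^ k :=
      fun u => Polynomial.eval_eq_sum_range' (by omega) u
    have hGc : ∀ u : ℂ, (starRingEnd ℂ) (G.eval u)
        = ∑ k ∈ Finset.range (n+1), (starRingEnd ℂ) (G.coeff k) * ((starRingEnd ℂ) u) ^ k := by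
      intro u
      rw [hGe, map_sum]
      simp
    have hcirc : ∀ u : ℂ, u * (starRingEnd ℂ) u = 1 → H.eval u = 0 := by
      intro u hu
      have h1 : (starRingEnd ℂ) u * G.eval u + u * (starRingEnd ℂ) (G.eval u) = 0 := by
        have h2 := h u
        rw [hu] at h2
        rw [hG]
        exact h2
      have key : ∀ k ∈ Finset.range (n+1),
          Polynomial.eval u (Polynomial.C (G.coeff k) * Polynomial.X ^ (n + k)
            + Polynomial.C ((starRingEnd ℂ) (G.coeff k)) * Polynomial.X ^ (n + 2 - k))
          = ((starRingEnd ℂ) u * (G.coeff k * u ^ k)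
              + u * ((starRingEnd ℂ) (G.coeff k) * ((starRingEnd ℂ) u) ^ k)) * u ^ (n+1) := by
        intro k hk
        rw [Finset.mem_range] at hk
        have e1 : u ^ (n+2-k) * u ^ k = u ^ (n+2) := by
          rw [← pow_add, Nat.sub_add_cancel (by omega)]
        simp only [Polynomial.eval_add, Polynomial.eval_mul, Polynomial.eval_C,
          Polynomial.eval_pow, Polynomial.eval_X]
        symm
        calc ((starRingEnd ℂ) u * (G.coeff k * u ^ k)
              + u * ((starRingEnd ℂ) (G.coeff k) * ((starRingEnd ℂ) u) ^ k)) * u ^ (n+1)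
            = G.coeff k * u ^ (n+k) * (u * (starRingEnd ℂ) u)
              + (starRingEnd ℂ) (G.coeff k) * (u ^ (n+2-k) * u ^ k) * ((starRingEnd ℂ) u) ^ k := by
              rw [e1]; ring
          _ = G.coeff k * u ^ (n+k) * (u * (starRingEnd ℂ) u)
              + (starRingEnd ℂ) (G.coeff k) * u ^ (n+2-k) * (u * (starRingEnd ℂ) u) ^ k := by
              ring
          _ = G.coeff k * u ^ (n+k) + (starRingEnd ℂ) (G.coeff k) * u ^ (n+2-k) := by
              rw [hu, one_pow, mul_one, mul_one]
      rw [hH, Polynomial.eval_finset_sum, Finset.sum_congr rfl key, ← Finset.sum_mul,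
        Finset.sum_add_distrib, ← Finset.mul_sum, ← Finset.mul_sum, ← hGe, ← hGc, h1, zero_mul]
    have hH0 : H = 0 :=
      Polynomial.eq_zero_of_infinite_isRoot H (circle_infinite.mono (fun u hu => hcirc u hu))
    have hcoeff : ∀ m, (∑ k ∈ Finset.range (n+1),
        ((if m = n + k then G.coeff k else 0)
          + (if m = n + 2 - k then (starRingEnd ℂ) (G.coeff k) else 0))) = 0 := by
      intro m
      have h2 : H.coeff m = 0 := by rw [hH0, Polynomial.coeff_zero]
      rw [hH, Polynomial.finset_sum_coeff] at h2
      simpa [Polynomial.coeff_add, Polynomial.coeff_C_mul, Polynomial.coeff_X_pow,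
        mul_ite, mul_one, mul_zero] using h2
    have hb3 : ∀ j, 3 ≤ j → G.coeff j = 0 := by
      intro j hj
      rcases le_or_gt j n with hle | hlt
      · have h1 : ∀ k ∈ Finset.range (n+1),
            ((if n + j = n + k then G.coeff k else 0)
              + (if n + j = n + 2 - k then (starRingEnd ℂ) (G.coeff k) else 0))
            = (if k = j then G.coeff k else 0) := by
          intro k hk
          rw [Finset.mem_range] at hk
          by_cases hkj : k = j
          · subst hkj; rw [if_pos rfl, if_neg (by omega), add_zero, if_pos rfl]
          · rw [if_neg (by omega), if_neg (by omega), if_neg hkj, add_zero]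
        have h2 := hcoeff (n + j)
        rw [Finset.sum_congr rfl h1, Finset.sum_ite_eq' (Finset.range (n+1)) j,
          if_pos (Finset.mem_range.2 (by omega))] at h2
        exact h2
      · exact Polynomial.coeff_eq_zero_of_natDegree_lt (by omega)
    have hb20 : G.coeff 2 + (starRingEnd ℂ) (G.coeff 0) = 0 := by
      have h1 : ∀ k ∈ Finset.range (n+1),
          ((if n + 2 = n + k then G.coeff k else 0)
            + (if n + 2 = n + 2 - k then (starRingEnd ℂ) (G.coeff k) else 0))
          = ((if k = 2 then G.coeff k else 0)
            + (if k = 0 then (starRingEnd ℂ) (G.coeff k) else 0)) := by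
        intro k hk
        rw [Finset.mem_range] at hk
        congr 1
        · by_cases h2 : k = 2
          · subst h2; rw [if_pos rfl, if_pos rfl]
          · rw [if_neg (by omega), if_neg h2]
        · by_cases h0 : k = 0
          · subst h0; rw [if_pos (by omega), if_pos rfl]
          · rw [if_neg (by omega), if_neg h0]
      have h2 := hcoeff (n + 2)
      rw [Finset.sum_congr rfl h1, Finset.sum_add_distrib,
        Finset.sum_ite_eq' (Finset.range (n+1)) 2,
        Finset.sum_ite_eq' (Finset.range (n+1)) 0,
        if_pos (Finset.mem_range.2 (by omega)), if_pos (Finset.mem_range.2 (by omega))] at h2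
      exact h2
    have hGform : G = Polynomial.C (G.coeff 0) + Polynomial.C (G.coeff 1) * Polynomial.X
        + Polynomial.C (G.coeff 2) * Polynomial.X ^ 2 := by
      ext m
      match m with
      | 0 => simp
      | 1 => simp
      | 2 => simp
      | (m+3) =>
        rw [hb3 (m+3) (by omega)]
        simp [Polynomial.coeff_X_pow]
    have hb1 : G.coeff 1 = 0 := by
      have heven : G.eval (-1) = G.eval 1 := by
        rw [hG, hG]
        have h2 := hhom (-1) 1 1
        rw [show ((-1:ℂ))^(2*(s+1)) = 1 by rw [pow_mul]; norm_num] at h2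
        simpa using h2
      rw [hGform] at heven
      simp at heven
      linear_combination (-1/2 : ℂ) * heven
    have hb2 : G.coeff 2 = -(starRingEnd ℂ) (G.coeff 0) := by linear_combination hb20
    have hf1 : ∀ u : ℂ, f u 1 = G.coeff 0 - (starRingEnd ℂ) (G.coeff 0) * u ^ 2 := by
      intro u
      rw [← hG, hGform, hb1, hb2]
      simp
      ring
    refine ⟨G.coeff 0, fun z w => ?_⟩
    set a := G.coeff 0 with ha
    set Q : Polynomial ℂ := MvPolynomial.aeval ![Polynomial.C z, Polynomial.X] p with hQ
    have hQe : ∀ w : ℂ, Q.eval w = f z w := by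
      intro w
      rw [hQ, eval_aeval_mv, hp,
        show (fun i => Polynomial.eval w (![Polynomial.C z, Polynomial.X] i)) = ![z, w]
          from by funext i; fin_cases i <;> simp]
    set R : Polynomial ℂ := Polynomial.C a * Polynomial.X ^ (s+1)
      - Polynomial.C ((starRingEnd ℂ) a * z ^ 2) * Polynomial.X ^ s with hR
    have hQR : Q - R = 0 := by
      apply Polynomial.eq_zero_of_infinite_isRoot
      refine ((Set.finite_singleton (0:ℂ)).infinite_compl).mono ?_
      intro w hw
      have hw0 : w ≠ 0 := hw
      simp only [Set.mem_setOf_eq, Polynomial.IsRoot, Polynomial.eval_sub, sub_eq_zero]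
      rw [hQe, hR]
      simp only [Polynomial.eval_sub, Polynomial.eval_mul, Polynomial.eval_C,
        Polynomial.eval_pow, Polynomial.eval_X]
      obtain ⟨l, hl⟩ : ∃ l : ℂ, l ^ 2 = w := ⟨_, Complex.cpow_nat_inv_pow w (by norm_num : (2:ℕ) ≠ 0)⟩
      have hl0 : l ≠ 0 := by
        rintro rfl
        rw [← hl] at hw0
        simp at hw0
      have h2 := hhom l (z / l) 1
      rw [mul_one, show l * (z / l) = z from by field_simp, hf1 (z / l)] at h2
      rw [← hl, h2]
      rw [show 2 * (s+1) = 2 * s + 2 from by ring]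
      field_simp
      ring
    have h3 := congrArg (Polynomial.eval w) hQR
    rw [Polynomial.eval_sub, Polynomial.eval_zero, sub_eq_zero, hQe, hR] at h3
    rw [h3]
    simp only [Polynomial.eval_sub, Polynomial.eval_mul, Polynomial.eval_C,
      Polynomial.eval_pow, Polynomial.eval_X]
  · rintro ⟨a, ha⟩ z
    rw [ha]
    simp only [map_sub, map_mul, map_pow, Complex.conj_conj]
    ring
end

section
/- Let t ≥ 0 and let f(z,w) be a polynomial in two complex variables that is weighted homogeneous of degree 2t+1 when z has weight 1 and w weight 2, and let g(w) be a polynomial in one variable. If g(zz̄) = z̄·f(z,zz̄) + z·conj(f(z,zz̄)) identically in z ∈ ℂ, then there exists b ∈ ℂ such that f(z,w) = b·z·w^t and g(w) = (b + b̄)·w^{t+1}. -/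
open Complex

private lemma eval_eval₂_aux (p : MvPolynomial (Fin 2) ℂ) (g : Fin 2 → Polynomial ℂ) (x : ℂ) :
    (MvPolynomial.eval₂ Polynomial.C g p).eval x
      = MvPolynomial.eval (fun i => (g i).eval x) p := by
  rw [show (Polynomial.eval x (MvPolynomial.eval₂ Polynomial.C g p))
      = (Polynomial.evalRingHom x) (MvPolynomial.eval₂ Polynomial.C g p) from rfl]
  rw [MvPolynomial.eval₂_comp_left (Polynomial.evalRingHom x) Polynomial.C g p]
  have h1 : (Polynomial.evalRingHom x).comp Polynomial.C = RingHom.id ℂ := by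
    ext a; simp
  rw [h1]
  rfl

private noncomputable def circPt (n : ℕ) : ℂ :=
  ((((n:ℝ)^2 - 1)/((n:ℝ)^2 + 1) : ℝ) : ℂ) + (((2*(n:ℝ))/((n:ℝ)^2 + 1) : ℝ) : ℂ) * I

private lemma circPt_mul_conj (n : ℕ) : circPt n * (starRingEnd ℂ) (circPt n) = 1 := by
  rw [Complex.mul_conj, circPt, Complex.normSq_add_mul_I]
  have h : ((n:ℝ)^2 + 1) ≠ 0 := by positivity
  have h2 : (((n:ℝ)^2 - 1)/((n:ℝ)^2 + 1)) ^ 2 + ((2*(n:ℝ))/((n:ℝ)^2 + 1)) ^ 2 = 1 := by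
    field_simp; ring
  rw [h2]; norm_num

private lemma circPt_injective : Function.Injective circPt := by
  intro m n hmn
  have hre : (circPt m).re = (circPt n).re := by rw [hmn]
  simp only [circPt, Complex.add_re, Complex.ofReal_re, Complex.mul_re, Complex.I_re,
    Complex.I_im, Complex.ofReal_im, mul_zero, zero_mul, mul_one, sub_zero, add_zero] at hre
  have hm : ((m:ℝ)^2 + 1) ≠ 0 := by positivity
  have hn : ((n:ℝ)^2 + 1) ≠ 0 := by positivity
  rw [div_eq_div_iff hm hn] at hre
  have h2 : (m:ℝ)^2 = (n:ℝ)^2 := by nlinarith [hre]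
  have h3 : (m:ℕ)^2 = (n:ℕ)^2 := by exact_mod_cast h2
  exact Nat.pow_left_injective (by norm_num) h3

theorem bishop_odd_homogeneous_solution
    (t : ℕ) (f : ℂ → ℂ → ℂ) (g : ℂ → ℂ)
    (hfpoly : ∃ p : MvPolynomial (Fin 2) ℂ, ∀ z w : ℂ, f z w = MvPolynomial.eval ![z, w] p)
    (hgpoly : ∃ q : Polynomial ℂ, ∀ w : ℂ, g w = q.eval w)
    (hhom : ∀ lam z w : ℂ, f (lam * z) (lam ^ 2 * w) = lam ^ (2 * t + 1) * f z w)
    (heq : ∀ z : ℂ, g (z * starRingEnd ℂ z)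
        = starRingEnd ℂ z * f z (z * starRingEnd ℂ z)
          + z * starRingEnd ℂ (f z (z * starRingEnd ℂ z))) :
    ∃ b : ℂ, (∀ z w : ℂ, f z w = b * z * w ^ t)
      ∧ (∀ w : ℂ, g w = (b + starRingEnd ℂ b) * w ^ (t + 1)) := by
  obtain ⟨p, hp⟩ := hfpoly
  obtain ⟨q, hq⟩ := hgpoly
  -- the one-variable polynomial representing `x ↦ f x 1`
  set h : Polynomial ℂ := MvPolynomial.eval₂ Polynomial.C ![Polynomial.X, 1] p with hhdef
  have hh : ∀ x : ℂ, h.eval x = f x 1 := by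
    intro x
    have hv : (fun i => Polynomial.eval x (![Polynomial.X, 1] i)) = ![x, (1:ℂ)] := by
      funext i; fin_cases i <;> simp
    rw [hp x 1, hhdef, eval_eval₂_aux, hv]
  set d := h.natDegree with hd
  set c : ℕ → ℂ := fun k => h.coeff k with hc
  set G : ℂ := g 1 with hG
  -- circle identity
  have hcirc : ∀ lam : ℂ, lam * (starRingEnd ℂ) lam = 1 →
      (starRingEnd ℂ) lam * h.eval lam + lam * (starRingEnd ℂ) (h.eval lam) = G := by
    intro lam hl
    have h1 := heq lam
    rw [hl] at h1
    rw [hh]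
    exact h1.symm
  -- the auxiliary polynomial which vanishes on the circle
  set P : Polynomial ℂ := Polynomial.X ^ d * h
      + (∑ k ∈ Finset.range (d+1),
          Polynomial.C ((starRingEnd ℂ) (c k)) * Polynomial.X ^ (d + 2 - k))
      - Polynomial.C G * Polynomial.X ^ (d+1) with hP
  have hProot : ∀ lam : ℂ, lam * (starRingEnd ℂ) lam = 1 → P.eval lam = 0 := by
    intro lam hl
    have hl0 : lam ≠ 0 := by
      intro h0; rw [h0] at hl; simp at hl
    have hlinv : (starRingEnd ℂ) lam = lam⁻¹ := by
      apply eq_inv_of_mul_eq_one_left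
      rw [mul_comm]; exact hl
    have hconj : (starRingEnd ℂ) (h.eval lam)
        = ∑ k ∈ Finset.range (d+1), (starRingEnd ℂ) (c k) * (lam⁻¹)^k := by
      rw [Polynomial.eval_eq_sum_range, map_sum]
      refine Finset.sum_congr rfl fun k _ => ?_
      rw [map_mul, map_pow, hlinv]
    have hQ : Polynomial.eval lam (∑ k ∈ Finset.range (d+1),
          Polynomial.C ((starRingEnd ℂ) (c k)) * Polynomial.X ^ (d + 2 - k))
        = lam ^ (d+2) * (starRingEnd ℂ) (h.eval lam) := by
      rw [hconj, Polynomial.eval_finset_sum, Finset.mul_sum]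
      refine Finset.sum_congr rfl fun k hk => ?_
      rw [Finset.mem_range] at hk
      simp only [Polynomial.eval_mul, Polynomial.eval_C, Polynomial.eval_pow, Polynomial.eval_X]
      have hpow : lam ^ (d + 2 - k) * lam ^ k = lam ^ (d+2) := by
        rw [← pow_add]; congr 1; omega
      have hk0 : lam ^ k ≠ 0 := pow_ne_zero _ hl0
      linear_combination ((starRingEnd ℂ) (c k) * lam⁻¹ ^ k) * hpow
        - ((starRingEnd ℂ) (c k) * lam ^ (d + 2 - k)) * mul_inv_cancel₀ hk0
    have hcl := hcirc lam hl
    rw [hlinv] at hcl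
    have hcl2 : h.eval lam + lam^2 * (starRingEnd ℂ) (h.eval lam) = G * lam := by
      field_simp at hcl
      linear_combination hcl
    simp only [hP, Polynomial.eval_sub, Polynomial.eval_add, Polynomial.eval_mul,
      Polynomial.eval_pow, Polynomial.eval_X, Polynomial.eval_C, hQ]
    linear_combination lam ^ d * hcl2
  have hP0 : P = 0 := by
    apply Polynomial.eq_zero_of_infinite_isRoot
    apply Set.infinite_of_injective_forall_mem circPt_injective
    intro n
    simp only [Set.mem_setOf_eq, Polynomial.IsRoot]
    exact hProot (circPt n) (circPt_mul_conj n)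
  -- high coefficients vanish
  have hck : ∀ k, 3 ≤ k → c k = 0 := by
    intro k hk
    have h1 : P.coeff (k + d) = c k := by
      simp only [hP, Polynomial.coeff_sub, Polynomial.coeff_add]
      rw [Polynomial.coeff_X_pow_mul]
      rw [Polynomial.finset_sum_coeff]
      have h2 : ∑ j ∈ Finset.range (d+1),
          (Polynomial.C ((starRingEnd ℂ) (c j)) * Polynomial.X ^ (d+2-j)).coeff (k+d) = 0 := by
        refine Finset.sum_eq_zero fun j hj => ?_
        rw [Finset.mem_range] at hj
        rw [Polynomial.coeff_C_mul, Polynomial.coeff_X_pow, if_neg (by omega), mul_zero]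
      rw [h2, Polynomial.coeff_C_mul, Polynomial.coeff_X_pow, if_neg (by omega), mul_zero]
      simp [hc]
    rw [hP0] at h1
    simpa using h1.symm
  have hd2 : h.natDegree ≤ 2 :=
    Polynomial.natDegree_le_iff_coeff_eq_zero.2 (fun N hN => hck N (by omega))
  have heval : ∀ x : ℂ, h.eval x = c 0 + c 1 * x + c 2 * x^2 := by
    intro x
    rw [Polynomial.eval_eq_sum_range' (lt_of_le_of_lt hd2 (by norm_num : (2:ℕ) < 3))]
    simp [Finset.sum_range_succ, hc]
  -- oddness from homogeneity with lam = -1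
  have hodd : ∀ x : ℂ, f (-x) 1 = - f x 1 := by
    intro x
    have h1 := hhom (-1) x 1
    have h2 : ((-1:ℂ))^2 * 1 = 1 := by norm_num
    have h3 : (-1:ℂ) ^ (2*t+1) = -1 := Odd.neg_one_pow ⟨t, by ring⟩
    rw [h2, h3, neg_one_mul, neg_one_mul] at h1
    exact h1
  have hc02 : c 0 = 0 ∧ c 2 = 0 := by
    have e1 : c 0 + c 1 * (-1) + c 2 * (-1)^2 = -(c 0 + c 1 * 1 + c 2 * 1^2) := by
      rw [← heval, ← heval, hh, hh]
      simpa using hodd 1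
    have e2 : c 0 + c 1 * (-2) + c 2 * (-2)^2 = -(c 0 + c 1 * 2 + c 2 * 2^2) := by
      rw [← heval, ← heval, hh, hh]
      simpa using hodd 2
    constructor
    · linear_combination (4*e1 - e2)/6
    · linear_combination (e2 - e1)/6
  set b : ℂ := c 1 with hb
  have hfx1 : ∀ x : ℂ, f x 1 = b * x := by
    intro x
    rw [← hh, heval, hc02.1, hc02.2]
    ring
  -- recover f everywhere via homogeneity
  have hf : ∀ z w : ℂ, f z w = b * z * w ^ t := by
    intro z w
    set k1 : Polynomial ℂ := MvPolynomial.eval₂ Polynomial.C ![Polynomial.C z, Polynomial.X] p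
      with hk1def
    have hk1 : ∀ u : ℂ, k1.eval u = f z u := by
      intro u
      have hv : (fun i => Polynomial.eval u (![Polynomial.C z, Polynomial.X] i)) = ![z, u] := by
        funext i; fin_cases i <;> simp
      rw [hp z u, hk1def, eval_eval₂_aux, hv]
    have hagree : {(0:ℂ)}ᶜ ⊆ {x : ℂ | k1.eval x
        = (Polynomial.C (b*z) * Polynomial.X ^ t).eval x} := by
      intro u hu
      have hu0 : u ≠ 0 := hu
      obtain ⟨μ, hμ⟩ := IsAlgClosed.exists_pow_nat_eq u (n := 2) (by norm_num)
      have hμ0 : μ ≠ 0 := by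
        intro h0; rw [h0] at hμ; simp at hμ; exact hu0 hμ.symm
      have h1 : μ * (z / μ) = z := by field_simp
      have h2 := hhom μ (z/μ) 1
      rw [h1, mul_one, hfx1] at h2
      simp only [Set.mem_setOf_eq, Polynomial.eval_mul, Polynomial.eval_C, Polynomial.eval_pow,
        Polynomial.eval_X]
      rw [hk1, ← hμ, h2]
      have hpow : μ ^ (2*t+1) = (μ^2)^t * μ := by
        rw [← pow_mul, ← pow_succ]
      rw [hpow]
      field_simp
    have hinf : Set.Infinite {x : ℂ | k1.eval x
        = (Polynomial.C (b*z) * Polynomial.X ^ t).eval x} :=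
      ((Set.finite_singleton (0:ℂ)).infinite_compl).mono hagree
    have hpoly := Polynomial.eq_of_infinite_eval_eq _ _ hinf
    have := congrArg (Polynomial.eval w) hpoly
    rw [hk1 w] at this
    simpa using this
  -- recover g
  have hqn : ∀ n : ℕ, q.eval ((n:ℂ)^2) = (b + (starRingEnd ℂ) b) * (((n:ℂ)^2))^(t+1) := by
    intro n
    have h1 := heq (n:ℂ)
    have hcn : (starRingEnd ℂ) ((n:ℂ)) = (n:ℂ) := by simp
    rw [hcn] at h1
    rw [hf] at h1
    rw [hq] at h1
    simp only [map_mul, map_pow, hcn] at h1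
    rw [pow_two]
    linear_combination h1
  have hq2 : q = Polynomial.C (b + (starRingEnd ℂ) b) * Polynomial.X ^ (t+1) := by
    apply Polynomial.eq_of_infinite_eval_eq
    apply Set.infinite_of_injective_forall_mem (f := fun n : ℕ => ((n:ℂ))^2)
    · intro m n hmn
      simp only at hmn
      have h3 : (m:ℕ)^2 = (n:ℕ)^2 := by exact_mod_cast hmn
      exact Nat.pow_left_injective (by norm_num) h3
    · intro n
      simp only [Set.mem_setOf_eq, Polynomial.eval_mul, Polynomial.eval_C, Polynomial.eval_pow,
        Polynomial.eval_X]
      exact hqn n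
  refine ⟨b, hf, fun w => ?_⟩
  rw [hq w, hq2]
  simp
end

section
/- Let m ≥ 4 and let G(z,z̄) = Σ_{α+β=m} c_{αβ} z^α z̄^β be a real-valued homogeneous polynomial of degree m with no harmonic terms (i.e. c_{m,0} = c_{0,m} = 0). Then there exist unique holomorphic polynomials f(z,w) (weighted homogeneous of degree m−1, wt z=1, wt w=2, divisible by z²) and g(z,w) (weighted homogeneous of degree m) such that g(z,zz̄) − 2Re( z̄·f(z,zz̄) ) = G(z,z̄) identically in z. -/
open Complex Finset

/-- A function `ℂ × ℂ → ℂ` given by a holomorphic polynomial in two variables. -/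
def IsPolyFun2 (f : ℂ → ℂ → ℂ) : Prop :=
  ∃ p : MvPolynomial (Fin 2) ℂ, ∀ z w : ℂ, f z w = MvPolynomial.eval ![z, w] p

lemma isPolyFun2_sum (s : Finset ℕ) (φ : ℕ → ℂ) (e d : ℕ → ℕ) :
    IsPolyFun2 (fun z w => -∑ j ∈ s, φ j * z ^ e j * w ^ d j) := by
  refine ⟨-∑ j ∈ s, MvPolynomial.C (φ j) * MvPolynomial.X 0 ^ e j * MvPolynomial.X 1 ^ d j, ?_⟩
  intro z w
  simp [MvPolynomial.eval_sum]

lemma split_sum (m : ℕ) (hm : 4 ≤ m) (t : ℕ → ℂ) :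
    ∑ β ∈ range (m + 1), t β
      = t 0 + (∑ j ∈ range ((m - 1) / 2), t (j + 1))
        + (if m % 2 = 0 then t (m / 2) else 0)
        + (∑ j ∈ range ((m - 1) / 2), t (m - 1 - j)) + t m := by
  set n := (m - 1) / 2 with hn
  have h1 : ∑ j ∈ range n, t (j + 1) = ∑ β ∈ Ico 1 (n + 1), t β := by
    rw [Finset.sum_Ico_eq_sum_range]
    simp [add_comm]
  have h2 : ∑ j ∈ range n, t (m - 1 - j) = ∑ β ∈ Ico (m - n) m, t β := by
    rw [Finset.sum_Ico_eq_sum_range]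
    have hmn : m - (m - n) = n := by omega
    rw [hmn]
    rw [← Finset.sum_range_reflect]
    apply Finset.sum_congr rfl
    intro j hj
    simp only [Finset.mem_range] at hj
    congr 1
    omega
  have h3 : (if m % 2 = 0 then t (m / 2) else 0) = ∑ β ∈ Ico (n + 1) (m - n), t β := by
    rcases Nat.even_or_odd m with he | ho
    · have : m % 2 = 0 := Nat.even_iff.mp he
      rw [if_pos this]
      have : m - n = n + 2 := by omega
      rw [this]
      rw [Finset.sum_Ico_eq_sum_range]
      have : n + 2 - (n + 1) = 1 := by omega
      rw [this, Finset.sum_range_one]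
      congr 1
      omega
    · have : ¬ m % 2 = 0 := by
        have := Nat.odd_iff.mp ho; omega
      rw [if_neg this]
      have : m - n = n + 1 := by omega
      rw [this]
      simp
  rw [h1, h2, h3]
  have e0 : t 0 = ∑ β ∈ Ico 0 1, t β := by simp
  have em : t m = ∑ β ∈ Ico m (m + 1), t β := by simp
  rw [e0, em]
  rw [Finset.sum_Ico_consecutive _ (by omega : (0:ℕ) ≤ 1) (by omega : 1 ≤ n + 1)]
  rw [Finset.sum_Ico_consecutive _ (by omega : (0:ℕ) ≤ n + 1) (by omega : n + 1 ≤ m - n)]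
  rw [Finset.sum_Ico_consecutive _ (by omega : (0:ℕ) ≤ m - n) (by omega : m - n ≤ m)]
  rw [Finset.sum_Ico_consecutive _ (by omega : (0:ℕ) ≤ m) (by omega : m ≤ m + 1)]
  rw [Finset.range_eq_Ico]

lemma exist_calc (m : ℕ) (hm : 4 ≤ m) (c : ℕ → ℕ → ℂ)
    (hsupp : ∀ α β : ℕ, c α β ≠ 0 → α + β = m)
    (hreal : ∀ α β : ℕ, c β α = starRingEnd ℂ (c α β))
    (h1 : c m 0 = 0) (h2 : c 0 m = 0) (z : ℂ) :
    (if m % 2 = 0 then c (m / 2) (m / 2) * (z * starRingEnd ℂ z) ^ (m / 2) else 0)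
      - (starRingEnd ℂ z
            * (-∑ j ∈ range ((m - 1) / 2),
                c (m - 1 - j) (j + 1) * z ^ (m - 1 - 2 * j) * (z * starRingEnd ℂ z) ^ j)
         + starRingEnd ℂ (starRingEnd ℂ z
            * (-∑ j ∈ range ((m - 1) / 2),
                c (m - 1 - j) (j + 1) * z ^ (m - 1 - 2 * j) * (z * starRingEnd ℂ z) ^ j)))
      = ∑ α ∈ range (m + 1), ∑ β ∈ range (m + 1),
          c α β * z ^ α * (starRingEnd ℂ z) ^ β := by
  have hrhs : ∑ α ∈ range (m + 1), ∑ β ∈ range (m + 1),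
      c α β * z ^ α * (starRingEnd ℂ z) ^ β
      = ∑ β ∈ range (m + 1), c (m - β) β * z ^ (m - β) * (starRingEnd ℂ z) ^ β := by
    have step1 : ∀ α ∈ range (m + 1),
        ∑ β ∈ range (m + 1), c α β * z ^ α * (starRingEnd ℂ z) ^ β
          = c α (m - α) * z ^ α * (starRingEnd ℂ z) ^ (m - α) := by
      intro α hα
      simp only [Finset.mem_range] at hα
      apply Finset.sum_eq_single (m - α)
      · intro b _ hb
        by_cases hc : c α b = 0
        · simp [hc]
        · exact absurd (hsupp α b hc) (by omega)
      · intro h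
        exact absurd (Finset.mem_range.mpr (by omega)) h
    rw [Finset.sum_congr rfl step1]
    rw [← Finset.sum_range_reflect]
    apply Finset.sum_congr rfl
    intro β hβ
    simp only [Finset.mem_range] at hβ
    have e : m + 1 - 1 - β = m - β := by omega
    have e' : m - (m - β) = β := by omega
    rw [e, e']
  rw [hrhs, split_sum m hm]
  have ht0 : c (m - 0) 0 * z ^ (m - 0) * (starRingEnd ℂ z) ^ 0 = 0 := by
    simp [h1]
  have htm : c (m - m) m * z ^ (m - m) * (starRingEnd ℂ z) ^ m = 0 := by
    simp [h2]
  rw [ht0, htm]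
  have hsum1 : starRingEnd ℂ z
      * (∑ j ∈ range ((m - 1) / 2),
          c (m - 1 - j) (j + 1) * z ^ (m - 1 - 2 * j) * (z * starRingEnd ℂ z) ^ j)
      = ∑ j ∈ range ((m - 1) / 2),
          c (m - (j + 1)) (j + 1) * z ^ (m - (j + 1)) * (starRingEnd ℂ z) ^ (j + 1) := by
    rw [Finset.mul_sum]
    apply Finset.sum_congr rfl
    intro j hj
    simp only [Finset.mem_range] at hj
    have e1 : m - (j + 1) = m - 1 - j := by omega
    rw [e1, mul_pow]
    have e2 : z ^ (m - 1 - j) = z ^ (m - 1 - 2 * j) * z ^ j := by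
      rw [← pow_add]; congr 1; omega
    rw [e2, pow_succ]
    ring
  have hsum2 : starRingEnd ℂ (∑ j ∈ range ((m - 1) / 2),
          c (m - (j + 1)) (j + 1) * z ^ (m - (j + 1)) * (starRingEnd ℂ z) ^ (j + 1))
      = ∑ j ∈ range ((m - 1) / 2),
          c (m - (m - 1 - j)) (m - 1 - j) * z ^ (m - (m - 1 - j))
            * (starRingEnd ℂ z) ^ (m - 1 - j) := by
    rw [map_sum]
    apply Finset.sum_congr rfl
    intro j hj
    simp only [Finset.mem_range] at hj
    have e2 : m - (j + 1) = m - 1 - j := by omega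
    have e1 : m - (m - 1 - j) = j + 1 := by omega
    rw [e2, map_mul, map_mul, map_pow, map_pow, Complex.conj_conj, ← hreal, e1]
    ring
  calc (if m % 2 = 0 then c (m / 2) (m / 2) * (z * starRingEnd ℂ z) ^ (m / 2) else 0)
      - (starRingEnd ℂ z
            * (-∑ j ∈ range ((m - 1) / 2),
                c (m - 1 - j) (j + 1) * z ^ (m - 1 - 2 * j) * (z * starRingEnd ℂ z) ^ j)
         + starRingEnd ℂ (starRingEnd ℂ z
            * (-∑ j ∈ range ((m - 1) / 2),
                c (m - 1 - j) (j + 1) * z ^ (m - 1 - 2 * j) * (z * starRingEnd ℂ z) ^ j)))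
      = (if m % 2 = 0 then c (m / 2) (m / 2) * (z * starRingEnd ℂ z) ^ (m / 2) else 0)
        + (starRingEnd ℂ z
            * (∑ j ∈ range ((m - 1) / 2),
                c (m - 1 - j) (j + 1) * z ^ (m - 1 - 2 * j) * (z * starRingEnd ℂ z) ^ j))
        + starRingEnd ℂ (starRingEnd ℂ z
            * (∑ j ∈ range ((m - 1) / 2),
                c (m - 1 - j) (j + 1) * z ^ (m - 1 - 2 * j) * (z * starRingEnd ℂ z) ^ j)) := by
        rw [mul_neg, map_neg]; ring
    _ = (if m % 2 = 0 then c (m - m / 2) (m / 2) * z ^ (m - m / 2) * (starRingEnd ℂ z) ^ (m / 2) else 0)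
        + (∑ j ∈ range ((m - 1) / 2),
            c (m - (j + 1)) (j + 1) * z ^ (m - (j + 1)) * (starRingEnd ℂ z) ^ (j + 1))
        + (∑ j ∈ range ((m - 1) / 2),
            c (m - (m - 1 - j)) (m - 1 - j) * z ^ (m - (m - 1 - j))
              * (starRingEnd ℂ z) ^ (m - 1 - j)) := by
        rw [hsum1, hsum2]
        congr 1
        congr 1
        by_cases h : m % 2 = 0
        · rw [if_pos h, if_pos h]
          have e : m - m / 2 = m / 2 := by omega
          rw [e, mul_pow]; ring
        · rw [if_neg h, if_neg h]
    _ = _ := by ring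

lemma homog_structure (d : ℕ) (f : ℂ → ℂ → ℂ) (hp : IsPolyFun2 f)
    (hh : ∀ lam z w : ℂ, f (lam * z) (lam ^ 2 * w) = lam ^ d * f z w) :
    ∃ a : ℕ → ℂ, ∀ z w : ℂ,
      f z w = ∑ k ∈ range (d / 2 + 1), a k * z ^ (d - 2 * k) * w ^ k := by
  obtain ⟨p, hf⟩ := hp
  set E : ℕ → (Fin 2 →₀ ℕ) := fun k => Finsupp.single 0 (d - 2 * k) + Finsupp.single 1 k
    with hE
  have hE0 : ∀ k, E k 0 = d - 2 * k := by
    intro k; simp [hE, Finsupp.single_apply]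
  have hE1 : ∀ k, E k 1 = k := by
    intro k; simp [hE, Finsupp.single_apply]
  refine ⟨fun k => MvPolynomial.coeff (E k) p, ?_⟩
  intro z w
  have heval : ∀ z w : ℂ, f z w
      = ∑ e ∈ p.support, MvPolynomial.coeff e p * z ^ e 0 * w ^ e 1 := by
    intro z w
    rw [hf, MvPolynomial.eval_eq']
    apply Finset.sum_congr rfl
    intro e _
    rw [Fin.prod_univ_two]
    simp [mul_assoc]
  have key : (∑ e ∈ p.support,
        Polynomial.C (MvPolynomial.coeff e p * z ^ e 0 * w ^ e 1)
          * Polynomial.X ^ (e 0 + 2 * e 1))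
      = Polynomial.C (f z w) * Polynomial.X ^ d := by
    apply Polynomial.funext
    intro lam
    have hl : f (lam * z) (lam ^ 2 * w) = lam ^ d * f z w := hh lam z w
    rw [heval] at hl
    simp only [Polynomial.eval_finset_sum, Polynomial.eval_mul, Polynomial.eval_C,
      Polynomial.eval_pow, Polynomial.eval_X]
    rw [mul_comm (lam ^ d) (f z w)] at hl
    rw [← hl]
    apply Finset.sum_congr rfl
    intro e _
    rw [mul_pow, mul_pow, ← pow_mul, pow_add]
    ring
  have hcoeff := congrArg (fun q => Polynomial.coeff q d) key
  simp only [Polynomial.finset_sum_coeff, Polynomial.coeff_C_mul,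
    Polynomial.coeff_X_pow] at hcoeff
  have hfzw : f z w = ∑ e ∈ p.support.filter (fun e => e 0 + 2 * e 1 = d),
      MvPolynomial.coeff e p * z ^ e 0 * w ^ e 1 := by
    simp only [if_true, mul_one, mul_ite, mul_zero] at hcoeff
    rw [← hcoeff, Finset.sum_filter]
    apply Finset.sum_congr rfl
    intro e _
    by_cases h : e 0 + 2 * e 1 = d
    · rw [if_pos h, if_pos h.symm]
    · rw [if_neg h, if_neg (fun hh => h hh.symm)]
  rw [hfzw]
  set S := p.support.filter (fun e => e 0 + 2 * e 1 = d) with hS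
  have hmemS : ∀ e ∈ S, e 0 + 2 * e 1 = d := by
    intro e he
    exact (Finset.mem_filter.mp he).2
  have hsub : S.image (fun e => e 1) ⊆ range (d / 2 + 1) := by
    intro k hk
    obtain ⟨e, heS, hek⟩ := Finset.mem_image.mp hk
    have := hmemS e heS
    exact Finset.mem_range.mpr (by omega)
  have hvan : ∀ k ∈ range (d / 2 + 1), k ∉ S.image (fun e => e 1) →
      MvPolynomial.coeff (E k) p * z ^ (d - 2 * k) * w ^ k = 0 := by
    intro k hk hkim
    have hk' := Finset.mem_range.mp hk
    by_cases hc : MvPolynomial.coeff (E k) p = 0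
    · rw [hc]; ring
    · exfalso
      apply hkim
      apply Finset.mem_image.mpr
      refine ⟨E k, ?_, hE1 k⟩
      rw [hS, Finset.mem_filter]
      refine ⟨MvPolynomial.mem_support_iff.mpr hc, ?_⟩
      rw [hE0, hE1]
      omega
  have hinj : ∀ e ∈ S, ∀ e' ∈ S, e 1 = e' 1 → e = e' := by
    intro e he e' he' h1
    have h := hmemS e he
    have h' := hmemS e' he'
    ext i
    fin_cases i
    · show e 0 = e' 0; omega
    · exact h1
  rw [← Finset.sum_subset hsub hvan, Finset.sum_image hinj]
  apply Finset.sum_congr rfl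
  intro e he
  have h := hmemS e he
  have hEe : E (e 1) = e := by
    ext i
    fin_cases i
    · show E (e 1) 0 = e 0
      rw [hE0]; omega
    · show E (e 1) 1 = e 1
      rw [hE1]
  have he0 : d - 2 * e 1 = e 0 := by omega
  rw [hEe, he0]



lemma circle_infinite_s3 : ({z : ℂ | ‖z‖ = 1}).Infinite := by
  have hinj : Set.InjOn (fun t : ℝ => Complex.exp (t * Complex.I)) (Set.Ioo 0 1) := by
    intro t1 h1 t2 h2 heq
    simp only [Set.mem_Ioo] at h1 h2
    rw [Complex.exp_eq_exp_iff_exists_int] at heq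
    obtain ⟨n, hn⟩ := heq
    have him := congrArg Complex.im hn
    simp [Complex.add_im, Complex.mul_im] at him
    have hpi := Real.pi_gt_three
    have : n = 0 := by
      by_contra hne
      rcases lt_or_gt_of_ne hne with h | h
      · have : (n : ℝ) ≤ -1 := by exact_mod_cast Int.le_sub_one_of_lt h
        nlinarith
      · have : (1 : ℝ) ≤ (n : ℝ) := by exact_mod_cast h
        nlinarith
    rw [this] at him
    simpa using him
  have himg := (Set.Ioo_infinite (by norm_num : (0:ℝ) < 1)).image hinj
  apply himg.mono
  rintro x ⟨t, _, rfl⟩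
  simp [Complex.norm_exp_ofReal_mul_I]

lemma poly_zero_of_circle (P : Polynomial ℂ)
    (h : ∀ z : ℂ, ‖z‖ = 1 → P.eval z = 0) : P = 0 := by
  apply Polynomial.eq_zero_of_infinite_isRoot
  apply Set.Infinite.mono _ circle_infinite_s3
  intro z hz
  exact h z hz


lemma circ_mono (z : ℂ) (hz : ‖z‖ = 1) (α β : ℕ) :
    z ^ (α + β) * (z ^ α * (starRingEnd ℂ z) ^ β) = z ^ (2 * α) := by
  have hz0 : z ≠ 0 := by
    intro h; rw [h] at hz; simp at hz
  have hc : starRingEnd ℂ z = z⁻¹ := by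
    have h1 : z * starRingEnd ℂ z = 1 := by
      rw [Complex.mul_conj]
      norm_cast
      rw [Complex.normSq_eq_norm_sq, hz]
      norm_num
    field_simp
    linear_combination h1
  rw [hc, inv_pow, pow_add, two_mul, pow_add]
  field_simp

lemma div_vanish (m : ℕ) (hm : 4 ≤ m) (f fstar : ℂ → ℂ → ℂ) (a : ℕ → ℂ)
    (hrep : ∀ z w : ℂ, f z w
      = ∑ k ∈ range ((m - 1) / 2 + 1), a k * z ^ (m - 1 - 2 * k) * w ^ k)
    (hstar : IsPolyFun2 fstar) (hdiv : ∀ z w : ℂ, f z w = z ^ 2 * fstar z w) :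
    a ((m - 1) / 2) = 0 := by
  obtain ⟨p, hp⟩ := hstar
  set K := (m - 1) / 2 with hK
  set Q : Polynomial ℂ := ∑ e ∈ p.support,
    Polynomial.C (MvPolynomial.coeff e p) * Polynomial.X ^ (e 0) with hQ
  have hQe : ∀ z : ℂ, fstar z 1 = Q.eval z := by
    intro z
    rw [hp, MvPolynomial.eval_eq', hQ]
    simp only [Polynomial.eval_finset_sum, Polynomial.eval_mul, Polynomial.eval_C,
      Polynomial.eval_pow, Polynomial.eval_X]
    apply Finset.sum_congr rfl
    intro e _
    rw [Fin.prod_univ_two]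
    simp
  set P1 : Polynomial ℂ := ∑ k ∈ range (K + 1),
    Polynomial.C (a k) * Polynomial.X ^ (m - 1 - 2 * k) with hP1
  have hPQ : P1 = Q * Polynomial.X ^ 2 := by
    apply Polynomial.funext
    intro z
    rw [hP1]
    simp only [Polynomial.eval_finset_sum, Polynomial.eval_mul, Polynomial.eval_C,
      Polynomial.eval_pow, Polynomial.eval_X]
    have := hrep z 1
    simp only [one_pow, mul_one] at this
    rw [← this, hdiv z 1, hQe z]
    ring
  have hlt : ¬ (2 ≤ m - 1 - 2 * K) := by omega
  have hR : (Q * Polynomial.X ^ 2).coeff (m - 1 - 2 * K) = 0 := by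
    rw [Polynomial.coeff_mul_X_pow', if_neg hlt]
  have hL : P1.coeff (m - 1 - 2 * K) = a K := by
    rw [hP1, Polynomial.finset_sum_coeff]
    rw [Finset.sum_eq_single K]
    · simp [Polynomial.coeff_C_mul, Polynomial.coeff_X_pow]
    · intro k hk hne
      rw [Finset.mem_range] at hk
      simp only [Polynomial.coeff_C_mul, Polynomial.coeff_X_pow]
      rw [if_neg (by omega), mul_zero]
    · intro h
      exact absurd (Finset.mem_range.mpr (by omega)) h
  rw [← hL, hPQ, hR]

lemma coeff_sum_CX (n : ℕ) (v : ℕ → ℂ) (φ : ℕ → ℕ) (N : ℕ) :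
    (∑ k ∈ range N, Polynomial.C (v k) * Polynomial.X ^ (φ k)).coeff n
      = ∑ k ∈ range N, if φ k = n then v k else 0 := by
  rw [Polynomial.finset_sum_coeff]
  apply Finset.sum_congr rfl
  intro k _
  rw [Polynomial.coeff_C_mul, Polynomial.coeff_X_pow]
  by_cases h : n = φ k
  · rw [if_pos h, if_pos h.symm, mul_one]
  · rw [if_neg h, if_neg (fun hh => h hh.symm), mul_zero]

lemma sols_eq (m : ℕ) (hm : 4 ≤ m) (f1 g1 f2 g2 : ℂ → ℂ → ℂ)
    (hf1p : IsPolyFun2 f1)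
    (hf1h : ∀ lam z w : ℂ, f1 (lam * z) (lam ^ 2 * w) = lam ^ (m - 1) * f1 z w)
    (hf1d : ∃ fstar : ℂ → ℂ → ℂ, IsPolyFun2 fstar ∧ ∀ z w : ℂ, f1 z w = z ^ 2 * fstar z w)
    (hg1p : IsPolyFun2 g1)
    (hg1h : ∀ lam z w : ℂ, g1 (lam * z) (lam ^ 2 * w) = lam ^ m * g1 z w)
    (hf2p : IsPolyFun2 f2)
    (hf2h : ∀ lam z w : ℂ, f2 (lam * z) (lam ^ 2 * w) = lam ^ (m - 1) * f2 z w)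
    (hf2d : ∃ fstar : ℂ → ℂ → ℂ, IsPolyFun2 fstar ∧ ∀ z w : ℂ, f2 z w = z ^ 2 * fstar z w)
    (hg2p : IsPolyFun2 g2)
    (hg2h : ∀ lam z w : ℂ, g2 (lam * z) (lam ^ 2 * w) = lam ^ m * g2 z w)
    (hsurf : ∀ z : ℂ,
      g1 z (z * starRingEnd ℂ z)
        - (starRingEnd ℂ z * f1 z (z * starRingEnd ℂ z)
           + starRingEnd ℂ (starRingEnd ℂ z * f1 z (z * starRingEnd ℂ z)))
      = g2 z (z * starRingEnd ℂ z)
        - (starRingEnd ℂ z * f2 z (z * starRingEnd ℂ z)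
           + starRingEnd ℂ (starRingEnd ℂ z * f2 z (z * starRingEnd ℂ z)))) :
    f1 = f2 ∧ g1 = g2 := by
  set K := (m - 1) / 2 with hK
  have hK' : (m - 1) / 2 = K := rfl
  obtain ⟨a1, ha1⟩ := homog_structure (m - 1) f1 hf1p hf1h
  obtain ⟨a2, ha2⟩ := homog_structure (m - 1) f2 hf2p hf2h
  obtain ⟨b1, hb1⟩ := homog_structure m g1 hg1p hg1h
  obtain ⟨b2, hb2⟩ := homog_structure m g2 hg2p hg2h
  obtain ⟨fs1, hfs1p, hfs1⟩ := hf1d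
  obtain ⟨fs2, hfs2p, hfs2⟩ := hf2d
  have hvan1 : a1 K = 0 := div_vanish m hm f1 fs1 a1 ha1 hfs1p hfs1
  have hvan2 : a2 K = 0 := div_vanish m hm f2 fs2 a2 ha2 hfs2p hfs2
  have hf1rep : ∀ z w : ℂ, f1 z w = ∑ k ∈ range K, a1 k * z ^ (m - 1 - 2 * k) * w ^ k := by
    intro z w
    rw [ha1 z w, hK', Finset.sum_range_succ, hvan1]
    simp
  have hf2rep : ∀ z w : ℂ, f2 z w = ∑ k ∈ range K, a2 k * z ^ (m - 1 - 2 * k) * w ^ k := by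
    intro z w
    rw [ha2 z w, hK', Finset.sum_range_succ, hvan2]
    simp
  -- surface restrictions
  have hgs : ∀ (b : ℕ → ℂ) (g : ℂ → ℂ → ℂ),
      (∀ z w : ℂ, g z w = ∑ k ∈ range (m / 2 + 1), b k * z ^ (m - 2 * k) * w ^ k) →
      ∀ z : ℂ, g z (z * starRingEnd ℂ z)
        = ∑ k ∈ range (m / 2 + 1), b k * (z ^ (m - k) * (starRingEnd ℂ z) ^ k) := by
    intro b g hg z
    rw [hg]
    apply Finset.sum_congr rfl
    intro k hk
    simp only [Finset.mem_range] at hk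
    rw [mul_pow]
    have e : z ^ (m - k) = z ^ (m - 2 * k) * z ^ k := by
      rw [← pow_add]; congr 1; omega
    rw [e]; ring
  have hfs : ∀ (a : ℕ → ℂ) (f : ℂ → ℂ → ℂ),
      (∀ z w : ℂ, f z w = ∑ k ∈ range K, a k * z ^ (m - 1 - 2 * k) * w ^ k) →
      ∀ z : ℂ, starRingEnd ℂ z * f z (z * starRingEnd ℂ z)
        = ∑ k ∈ range K, a k * (z ^ (m - 1 - k) * (starRingEnd ℂ z) ^ (k + 1)) := by
    intro a f hf z
    rw [hf, Finset.mul_sum]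
    apply Finset.sum_congr rfl
    intro k hk
    simp only [Finset.mem_range] at hk
    rw [mul_pow]
    have e : z ^ (m - 1 - k) = z ^ (m - 1 - 2 * k) * z ^ k := by
      rw [← pow_add]; congr 1; omega
    rw [e, pow_succ]
    ring
  have hfcs : ∀ (a : ℕ → ℂ) (z : ℂ),
      starRingEnd ℂ (∑ k ∈ range K, a k * (z ^ (m - 1 - k) * (starRingEnd ℂ z) ^ (k + 1)))
        = ∑ k ∈ range K, (starRingEnd ℂ (a k)) * (z ^ (k + 1) * (starRingEnd ℂ z) ^ (m - 1 - k)) := by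
    intro a z
    rw [map_sum]
    apply Finset.sum_congr rfl
    intro k _
    rw [map_mul, map_mul, map_pow, map_pow, Complex.conj_conj]
    ring
  have hid : ∀ z : ℂ,
      ∑ k ∈ range (m / 2 + 1), (b1 k - b2 k) * (z ^ (m - k) * (starRingEnd ℂ z) ^ k)
      - ∑ k ∈ range K, (a1 k - a2 k) * (z ^ (m - 1 - k) * (starRingEnd ℂ z) ^ (k + 1))
      - ∑ k ∈ range K, (starRingEnd ℂ (a1 k - a2 k))
          * (z ^ (k + 1) * (starRingEnd ℂ z) ^ (m - 1 - k)) = 0 := by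
    intro z
    have h := hsurf z
    rw [hgs b1 g1 hb1 z, hgs b2 g2 hb2 z, hfs a1 f1 hf1rep z, hfs a2 f2 hf2rep z,
      hfcs a1 z, hfcs a2 z] at h
    simp only [sub_mul, map_sub, Finset.sum_sub_distrib]
    linear_combination h
  set P : Polynomial ℂ :=
      (∑ k ∈ range (m / 2 + 1), Polynomial.C (b1 k - b2 k) * Polynomial.X ^ (2 * (m - k)))
      - (∑ k ∈ range K, Polynomial.C (a1 k - a2 k) * Polynomial.X ^ (2 * (m - 1 - k)))
      - (∑ k ∈ range K, Polynomial.C (starRingEnd ℂ (a1 k - a2 k))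
          * Polynomial.X ^ (2 * (k + 1))) with hP
  have hP0 : P = 0 := by
    apply poly_zero_of_circle
    intro z hz
    rw [hP]
    simp only [Polynomial.eval_sub, Polynomial.eval_finset_sum, Polynomial.eval_mul,
      Polynomial.eval_C, Polynomial.eval_pow, Polynomial.eval_X]
    have e1 : ∑ k ∈ range (m / 2 + 1), (b1 k - b2 k) * z ^ (2 * (m - k))
        = z ^ m * ∑ k ∈ range (m / 2 + 1),
            (b1 k - b2 k) * (z ^ (m - k) * (starRingEnd ℂ z) ^ k) := by
      rw [Finset.mul_sum]
      apply Finset.sum_congr rfl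
      intro k hk
      simp only [Finset.mem_range] at hk
      have em : m = (m - k) + k := by omega
      rw [← circ_mono z hz (m - k) k, ← em]
      ring
    have e2 : ∑ k ∈ range K, (a1 k - a2 k) * z ^ (2 * (m - 1 - k))
        = z ^ m * ∑ k ∈ range K,
            (a1 k - a2 k) * (z ^ (m - 1 - k) * (starRingEnd ℂ z) ^ (k + 1)) := by
      rw [Finset.mul_sum]
      apply Finset.sum_congr rfl
      intro k hk
      simp only [Finset.mem_range] at hk
      have em : m = (m - 1 - k) + (k + 1) := by omega
      rw [← circ_mono z hz (m - 1 - k) (k + 1), ← em]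
      ring
    have e3 : ∑ k ∈ range K, (starRingEnd ℂ (a1 k - a2 k)) * z ^ (2 * (k + 1))
        = z ^ m * ∑ k ∈ range K,
            (starRingEnd ℂ (a1 k - a2 k))
              * (z ^ (k + 1) * (starRingEnd ℂ z) ^ (m - 1 - k)) := by
      rw [Finset.mul_sum]
      apply Finset.sum_congr rfl
      intro k hk
      simp only [Finset.mem_range] at hk
      have em : m = (k + 1) + (m - 1 - k) := by omega
      rw [← circ_mono z hz (k + 1) (m - 1 - k), ← em]
      ring
    rw [e1, e2, e3, ← mul_sub, ← mul_sub, hid z, mul_zero]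
  have hAz : ∀ k ∈ range K, a1 k - a2 k = 0 := by
    intro k0 hk0
    simp only [Finset.mem_range] at hk0
    have hc := congrArg (fun q => Polynomial.coeff q (2 * (k0 + 1))) hP0
    simp only [hP, Polynomial.coeff_sub, coeff_sum_CX, Polynomial.coeff_zero] at hc
    rw [Finset.sum_eq_zero, Finset.sum_eq_zero, Finset.sum_eq_single k0] at hc
    · rw [if_pos rfl] at hc
      have : starRingEnd ℂ (a1 k0 - a2 k0) = 0 := by linear_combination -hc
      have h2 := congrArg (starRingEnd ℂ) this
      rwa [Complex.conj_conj, map_zero] at h2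
    · intro k hk hne
      rw [if_neg (by omega)]
    · intro h
      exact absurd (Finset.mem_range.mpr (by omega)) h
    · intro k hk
      simp only [Finset.mem_range] at hk
      rw [if_neg (by omega)]
    · intro k hk
      simp only [Finset.mem_range] at hk
      rw [if_neg (by omega)]
  have hBz : ∀ k ∈ range (m / 2 + 1), b1 k - b2 k = 0 := by
    intro k0 hk0
    simp only [Finset.mem_range] at hk0
    have hc := congrArg (fun q => Polynomial.coeff q (2 * (m - k0))) hP0
    simp only [hP, Polynomial.coeff_sub, coeff_sum_CX, Polynomial.coeff_zero] at hc
    rw [Finset.sum_eq_single k0] at hc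
    · rw [if_pos rfl] at hc
      have hz2 : ∀ k ∈ range K, (if 2 * (m - 1 - k) = 2 * (m - k0) then a1 k - a2 k else 0) = 0 := by
        intro k hk
        rw [hAz k hk]
        simp
      have hz3 : ∀ k ∈ range K,
          (if 2 * (k + 1) = 2 * (m - k0) then starRingEnd ℂ (a1 k - a2 k) else 0) = 0 := by
        intro k hk
        rw [hAz k hk]
        simp
      rw [Finset.sum_eq_zero hz2, Finset.sum_eq_zero hz3] at hc
      linear_combination hc
    · intro k hk hne
      simp only [Finset.mem_range] at hk
      rw [if_neg (by omega)]
    · intro h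
      exact absurd (Finset.mem_range.mpr (by omega)) h
  constructor
  · funext z w
    rw [hf1rep, hf2rep]
    apply Finset.sum_congr rfl
    intro k hk
    rw [sub_eq_zero.mp (hAz k hk)]
  · funext z w
    rw [hb1, hb2]
    apply Finset.sum_congr rfl
    intro k hk
    rw [sub_eq_zero.mp (hBz k hk)]

theorem moser_operator_unique_solvability_no_harmonic
    (m : ℕ) (hm : 4 ≤ m) (c : ℕ → ℕ → ℂ)
    (hsupp : ∀ α β : ℕ, c α β ≠ 0 → α + β = m)
    (hreal : ∀ α β : ℕ, c β α = starRingEnd ℂ (c α β))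
    (hharm : c m 0 = 0 ∧ c 0 m = 0) :
    ∃! fg : (ℂ → ℂ → ℂ) × (ℂ → ℂ → ℂ),
      IsPolyFun2 fg.1
      ∧ (∀ lam z w : ℂ, fg.1 (lam * z) (lam ^ 2 * w) = lam ^ (m - 1) * fg.1 z w)
      ∧ (∃ fstar : ℂ → ℂ → ℂ, IsPolyFun2 fstar ∧ ∀ z w : ℂ, fg.1 z w = z ^ 2 * fstar z w)
      ∧ IsPolyFun2 fg.2
      ∧ (∀ lam z w : ℂ, fg.2 (lam * z) (lam ^ 2 * w) = lam ^ m * fg.2 z w)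
      ∧ (∀ z : ℂ,
          fg.2 z (z * starRingEnd ℂ z)
            - (starRingEnd ℂ z * fg.1 z (z * starRingEnd ℂ z)
               + starRingEnd ℂ (starRingEnd ℂ z * fg.1 z (z * starRingEnd ℂ z)))
          = ∑ α ∈ range (m + 1), ∑ β ∈ range (m + 1),
              c α β * z ^ α * (starRingEnd ℂ z) ^ β) := by
  obtain ⟨FF, hFp, hFh, hFd, hGp, hGh, hFsurf⟩ :
      ∃ FF : (ℂ → ℂ → ℂ) × (ℂ → ℂ → ℂ),
        IsPolyFun2 FF.1
        ∧ (∀ lam z w : ℂ, FF.1 (lam * z) (lam ^ 2 * w) = lam ^ (m - 1) * FF.1 z w)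
        ∧ (∃ fstar : ℂ → ℂ → ℂ, IsPolyFun2 fstar ∧ ∀ z w : ℂ, FF.1 z w = z ^ 2 * fstar z w)
        ∧ IsPolyFun2 FF.2
        ∧ (∀ lam z w : ℂ, FF.2 (lam * z) (lam ^ 2 * w) = lam ^ m * FF.2 z w)
        ∧ (∀ z : ℂ,
            FF.2 z (z * starRingEnd ℂ z)
              - (starRingEnd ℂ z * FF.1 z (z * starRingEnd ℂ z)
                 + starRingEnd ℂ (starRingEnd ℂ z * FF.1 z (z * starRingEnd ℂ z)))
            = ∑ α ∈ range (m + 1), ∑ β ∈ range (m + 1),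
                c α β * z ^ α * (starRingEnd ℂ z) ^ β) := by
    refine ⟨(fun z w => -∑ j ∈ range ((m - 1) / 2),
        c (m - 1 - j) (j + 1) * z ^ (m - 1 - 2 * j) * w ^ j,
      fun z w => if m % 2 = 0 then c (m / 2) (m / 2) * w ^ (m / 2) else 0),
      isPolyFun2_sum _ _ _ _, ?_, ?_, ?_, ?_, ?_⟩
    · intro lam z w
      show -∑ j ∈ range ((m - 1) / 2),
          c (m - 1 - j) (j + 1) * (lam * z) ^ (m - 1 - 2 * j) * (lam ^ 2 * w) ^ j
        = lam ^ (m - 1) * -∑ j ∈ range ((m - 1) / 2),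
            c (m - 1 - j) (j + 1) * z ^ (m - 1 - 2 * j) * w ^ j
      rw [mul_neg, neg_inj, Finset.mul_sum]
      apply Finset.sum_congr rfl
      intro j hj
      simp only [Finset.mem_range] at hj
      rw [mul_pow, mul_pow, ← pow_mul]
      have e : lam ^ (m - 1) = lam ^ (m - 1 - 2 * j) * lam ^ (2 * j) := by
        rw [← pow_add]; congr 1; omega
      rw [e]; ring
    · refine ⟨fun z w => -∑ j ∈ range ((m - 1) / 2),
        c (m - 1 - j) (j + 1) * z ^ (m - 3 - 2 * j) * w ^ j,
        isPolyFun2_sum _ _ _ _, ?_⟩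
      intro z w
      show -∑ j ∈ range ((m - 1) / 2),
          c (m - 1 - j) (j + 1) * z ^ (m - 1 - 2 * j) * w ^ j
        = z ^ 2 * -∑ j ∈ range ((m - 1) / 2),
            c (m - 1 - j) (j + 1) * z ^ (m - 3 - 2 * j) * w ^ j
      rw [mul_neg, neg_inj, Finset.mul_sum]
      apply Finset.sum_congr rfl
      intro j hj
      simp only [Finset.mem_range] at hj
      have e : z ^ (m - 1 - 2 * j) = z ^ 2 * z ^ (m - 3 - 2 * j) := by
        rw [← pow_add]; congr 1; omega
      rw [e]; ring
    · refine ⟨if m % 2 = 0 then MvPolynomial.C (c (m / 2) (m / 2))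
          * MvPolynomial.X 1 ^ (m / 2) else 0, ?_⟩
      intro z w
      by_cases h : m % 2 = 0 <;> simp [h]
    · intro lam z w
      show (if m % 2 = 0 then c (m / 2) (m / 2) * (lam ^ 2 * w) ^ (m / 2) else 0)
        = lam ^ m * (if m % 2 = 0 then c (m / 2) (m / 2) * w ^ (m / 2) else 0)
      by_cases h : m % 2 = 0
      · rw [if_pos h, if_pos h, mul_pow, ← pow_mul]
        have e : 2 * (m / 2) = m := by omega
        rw [e]; ring
      · rw [if_neg h, if_neg h, mul_zero]
    · intro z
      exact exist_calc m hm c hsupp hreal hharm.1 hharm.2 z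
  refine ⟨FF, ⟨hFp, hFh, hFd, hGp, hGh, hFsurf⟩, ?_⟩
  rintro ⟨f, g⟩ ⟨hfp, hfh, hfd, hgp, hgh, hsurf2⟩
  have heq := sols_eq m hm f g FF.1 FF.2 hfp hfh hfd hgp hgh hFp hFh hFd hGp hGh
      (fun z => (hsurf2 z).trans (hFsurf z).symm)
  exact Prod.ext heq.1 heq.2
end

section
/- Let N ≥ 1, c ∈ ℂ. Let f(z,w) be a polynomial in two variables with f(0,0) = 0, g(w) a one-variable polynomial with g(0) = 0, and let P(z,z̄) be a polynomial in (z,z̄) each of whose monomials contains a positive power of z̄. If g(zz̄) = c·z^N + z̄·f(z,zz̄) + z·conj(f(z,zz̄)) + P(z,z̄) holds identically for z ∈ ℂ, then c = 0. -/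
open Complex Finset

section NoPureAuxSection
open MvPolynomial

noncomputable section NoPureAux
set_option maxHeartbeats 1000000

/-- A two-variable function that is given by an `MvPolynomial`. -/
def RepNP (F : ℂ → ℂ → ℂ) : Prop :=
  ∃ Q : MvPolynomial (Fin 2) ℂ, ∀ z w : ℂ, F z w = MvPolynomial.eval ![z, w] Q

lemma RepNP.sub {F G : ℂ → ℂ → ℂ} (hF : RepNP F) (hG : RepNP G) :
    RepNP (fun z w => F z w - G z w) := by
  obtain ⟨Q, hQ⟩ := hF; obtain ⟨R, hR⟩ := hG
  exact ⟨Q - R, fun z w => by simp [hQ, hR]⟩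

lemma RepNP.add {F G : ℂ → ℂ → ℂ} (hF : RepNP F) (hG : RepNP G) :
    RepNP (fun z w => F z w + G z w) := by
  obtain ⟨Q, hQ⟩ := hF; obtain ⟨R, hR⟩ := hG
  exact ⟨Q + R, fun z w => by simp [hQ, hR]⟩

lemma RepNP.mul {F G : ℂ → ℂ → ℂ} (hF : RepNP F) (hG : RepNP G) :
    RepNP (fun z w => F z w * G z w) := by
  obtain ⟨Q, hQ⟩ := hF; obtain ⟨R, hR⟩ := hG
  exact ⟨Q * R, fun z w => by simp [hQ, hR]⟩

lemma repNP_cz_pow (c : ℂ) (N : ℕ) : RepNP (fun z _ => c * z ^ N) :=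
  ⟨MvPolynomial.C c * MvPolynomial.X 0 ^ N, fun z w => by simp⟩

lemma repNP_fst : RepNP (fun z _ => z) := ⟨MvPolynomial.X 0, fun z w => by simp⟩
lemma repNP_snd : RepNP (fun _ w => w) := ⟨MvPolynomial.X 1, fun z w => by simp⟩

lemma repNP_sum (s t : Finset ℕ) (p : ℕ → ℕ → ℂ) :
    RepNP (fun z w => ∑ α ∈ s, ∑ β ∈ t, p α β * z ^ α * w ^ β) := by
  refine ⟨∑ α ∈ s, ∑ β ∈ t, MvPolynomial.C (p α β) * MvPolynomial.X 0 ^ α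
      * MvPolynomial.X 1 ^ β, fun z w => ?_⟩
  simp [map_sum]

lemma aeval_eq_eval_c (y : ℂ) (q : Polynomial ℂ) :
    Polynomial.aeval y q = Polynomial.eval y q := by
  rw [Polynomial.aeval_def, Algebra.algebraMap_self]; rfl

lemma mv_aeval_eq_eval (v : Fin 2 → ℂ) (q : MvPolynomial (Fin 2) ℂ) :
    MvPolynomial.aeval v q = MvPolynomial.eval v q := by
  rw [← MvPolynomial.coe_aeval_eq_eval]; rfl

lemma RepNP.comp (p : MvPolynomial (Fin 2) ℂ) {A B : ℂ → ℂ → ℂ}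
    (hA : RepNP A) (hB : RepNP B) :
    RepNP (fun z w => MvPolynomial.eval ![A z w, B z w] p) := by
  obtain ⟨Qa, hQa⟩ := hA; obtain ⟨Qb, hQb⟩ := hB
  refine ⟨MvPolynomial.bind₁ ![Qa, Qb] p, fun z w => ?_⟩
  have hfun : (fun i => MvPolynomial.aeval ![z, w]
        ((![Qa, Qb] : Fin 2 → MvPolynomial (Fin 2) ℂ) i)) = ![A z w, B z w] := by
    funext i
    fin_cases i <;>
      simp only [Matrix.cons_val_zero, Matrix.cons_val_one, Matrix.head_cons,
        mv_aeval_eq_eval, Fin.isValue] <;> [exact (hQa z w).symm; exact (hQb z w).symm]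
  calc MvPolynomial.eval ![A z w, B z w] p
      = MvPolynomial.aeval ![A z w, B z w] p := (mv_aeval_eq_eval _ _).symm
    _ = MvPolynomial.aeval ![z, w] (MvPolynomial.bind₁ ![Qa, Qb] p) := by
        rw [MvPolynomial.aeval_bind₁, hfun]
    _ = MvPolynomial.eval ![z, w] (MvPolynomial.bind₁ ![Qa, Qb] p) := mv_aeval_eq_eval _ _

/-- Composing a one-variable polynomial with `z*w`. -/
lemma repNP_g (q : Polynomial ℂ) : RepNP (fun z w => q.eval (z * w)) := by
  refine ⟨Polynomial.eval₂ MvPolynomial.C (MvPolynomial.X 0 * MvPolynomial.X 1) q,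
    fun z w => ?_⟩
  rw [show (MvPolynomial.eval ![z, w]) (Polynomial.eval₂ MvPolynomial.C
      (MvPolynomial.X 0 * MvPolynomial.X 1) q)
    = Polynomial.eval₂ ((MvPolynomial.eval ![z, w]).comp MvPolynomial.C)
      (MvPolynomial.eval ![z, w] (MvPolynomial.X 0 * MvPolynomial.X 1)) q from
    Polynomial.hom_eval₂ _ _ _ _]
  have : ((MvPolynomial.eval ![z, w]).comp MvPolynomial.C) = RingHom.id ℂ := by
    ext r; simp
  have hx : MvPolynomial.eval ![z, w] (MvPolynomial.X 0 * MvPolynomial.X 1) = z * w := by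
    simp
  rw [this, hx]
  rfl

/-- Conjugated polynomial representation. -/
lemma repNP_conj (f : ℂ → ℂ → ℂ) (pf : MvPolynomial (Fin 2) ℂ)
    (hf : ∀ z w, f z w = MvPolynomial.eval ![z, w] pf) (z w : ℂ) :
    starRingEnd ℂ (f (starRingEnd ℂ z) (starRingEnd ℂ w))
      = MvPolynomial.eval ![z, w] (MvPolynomial.map (starRingEnd ℂ) pf) := by
  rw [hf, MvPolynomial.eval_map]
  have h1 : (starRingEnd ℂ) (MvPolynomial.eval₂ (RingHom.id ℂ)
      ![starRingEnd ℂ z, starRingEnd ℂ w] pf)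
      = MvPolynomial.eval₂ ((starRingEnd ℂ).comp (RingHom.id ℂ))
        ((starRingEnd ℂ) ∘ ![starRingEnd ℂ z, starRingEnd ℂ w]) pf :=
    MvPolynomial.eval₂_comp_left _ _ _ _
  rw [show MvPolynomial.eval ![starRingEnd ℂ z, starRingEnd ℂ w] pf
      = MvPolynomial.eval₂ (RingHom.id ℂ) ![starRingEnd ℂ z, starRingEnd ℂ w] pf from rfl,
    h1]
  have hfun : (⇑(starRingEnd ℂ)) ∘ ![starRingEnd ℂ z, starRingEnd ℂ w] = ![z, w] := by
    funext i; fin_cases i <;> simp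
  rw [RingHom.comp_id, hfun]

lemma eval_aeval_poly (P : MvPolynomial (Fin 2) ℂ) (g : Fin 2 → Polynomial ℂ) (y : ℂ) :
    Polynomial.eval y (MvPolynomial.aeval g P)
      = MvPolynomial.eval (fun i => Polynomial.eval y (g i)) P := by
  have h := MvPolynomial.comp_aeval (φ := Polynomial.aeval y) (f := g) (R := ℂ)
  have h2 : Polynomial.aeval y (MvPolynomial.aeval g P)
      = MvPolynomial.aeval (fun i => Polynomial.aeval y (g i)) P := by
    have := congrArg (fun ψ : MvPolynomial (Fin 2) ℂ →ₐ[ℂ] ℂ => ψ P) h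
    simpa using this
  simp only [aeval_eq_eval_c, mv_aeval_eq_eval] at h2
  exact h2

/-- A polynomial in two complex variables vanishing at all real points vanishes everywhere. -/
lemma vanishNP (P : MvPolynomial (Fin 2) ℂ)
    (h : ∀ x y : ℝ, MvPolynomial.eval ![(x : ℂ), (y : ℂ)] P = 0) (x y : ℂ) :
    MvPolynomial.eval ![x, y] P = 0 := by
  have key1 : ∀ (x : ℝ) (y : ℂ), MvPolynomial.eval ![(x : ℂ), y] P = 0 := by
    intro x y
    have hval : ∀ y : ℂ, Polynomial.eval y
        (MvPolynomial.aeval ![Polynomial.C (x : ℂ), Polynomial.X] P : Polynomial ℂ)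
        = MvPolynomial.eval ![(x : ℂ), y] P := by
      intro y
      rw [eval_aeval_poly]
      have hvf : (fun i => Polynomial.eval y ((![Polynomial.C (x : ℂ), Polynomial.X] :
          Fin 2 → Polynomial ℂ) i)) = ![(x : ℂ), y] := by
        funext i; fin_cases i <;> simp
      rw [hvf]
    have hpx : (MvPolynomial.aeval ![Polynomial.C (x : ℂ), Polynomial.X] P : Polynomial ℂ)
        = 0 := by
      apply Polynomial.eq_zero_of_infinite_isRoot
      refine Set.Infinite.mono ?_ (Set.infinite_range_of_injective Complex.ofReal_injective)
      rintro _ ⟨r, rfl⟩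
      show Polynomial.IsRoot _ _
      rw [Polynomial.IsRoot, hval]
      exact h x r
    rw [← hval, hpx]
    simp
  have hval2 : ∀ x : ℂ, Polynomial.eval x
      (MvPolynomial.aeval ![Polynomial.X, Polynomial.C y] P : Polynomial ℂ)
      = MvPolynomial.eval ![x, y] P := by
    intro x
    rw [eval_aeval_poly]
    have hvf : (fun i => Polynomial.eval x ((![Polynomial.X, Polynomial.C y] :
        Fin 2 → Polynomial ℂ) i)) = ![x, y] := by
      funext i; fin_cases i <;> simp
    rw [hvf]
  have hpy : (MvPolynomial.aeval ![Polynomial.X, Polynomial.C y] P : Polynomial ℂ) = 0 := by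
    apply Polynomial.eq_zero_of_infinite_isRoot
    refine Set.Infinite.mono ?_ (Set.infinite_range_of_injective Complex.ofReal_injective)
    rintro _ ⟨r, rfl⟩
    show Polynomial.IsRoot _ _
    rw [Polynomial.IsRoot, hval2]
    exact key1 r y
  rw [← hval2, hpy]
  simp

end NoPureAux

end NoPureAuxSection

theorem no_pure_z_power_term
    (N : ℕ) (hN : 1 ≤ N) (c : ℂ) (f : ℂ → ℂ → ℂ) (g : ℂ → ℂ)
    (hfpoly : ∃ p : MvPolynomial (Fin 2) ℂ, ∀ z w : ℂ, f z w = MvPolynomial.eval ![z, w] p)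
    (hf0 : f 0 0 = 0)
    (hgpoly : ∃ q : Polynomial ℂ, ∀ w : ℂ, g w = q.eval w)
    (hg0 : g 0 = 0)
    (d : ℕ) (p : ℕ → ℕ → ℂ)
    (hp : ∀ α : ℕ, p α 0 = 0)
    (heq : ∀ z : ℂ,
      g (z * starRingEnd ℂ z)
        = c * z ^ N
          + starRingEnd ℂ z * f z (z * starRingEnd ℂ z)
          + z * starRingEnd ℂ (f z (z * starRingEnd ℂ z))
          + ∑ α ∈ range (d + 1), ∑ β ∈ range (d + 1),
              p α β * z ^ α * (starRingEnd ℂ z) ^ β) :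
    c = 0 := by
  obtain ⟨pf, hpf⟩ := hfpoly
  obtain ⟨q, hq⟩ := hgpoly
  set pfc : MvPolynomial (Fin 2) ℂ := MvPolynomial.map (starRingEnd ℂ) pf with hpfc
  have hRep : RepNP (fun z w =>
      Polynomial.eval (z * w) q - (c * z ^ N + w * MvPolynomial.eval ![z, z * w] pf
      + z * MvPolynomial.eval ![w, z * w] pfc
      + ∑ α ∈ range (d + 1), ∑ β ∈ range (d + 1), p α β * z ^ α * w ^ β)) := by
    refine RepNP.sub (repNP_g q) ?_
    refine RepNP.add (RepNP.add (RepNP.add (repNP_cz_pow c N) ?_) ?_) (repNP_sum _ _ p)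
    · exact RepNP.mul repNP_snd (RepNP.comp pf repNP_fst (RepNP.mul repNP_fst repNP_snd))
    · exact RepNP.mul repNP_fst (RepNP.comp pfc repNP_snd (RepNP.mul repNP_fst repNP_snd))
  obtain ⟨Q, hQ⟩ := hRep
  -- step 1: Q vanishes on the antiholomorphic diagonal
  have h0 : ∀ z : ℂ, MvPolynomial.eval ![z, starRingEnd ℂ z] Q = 0 := by
    intro z
    rw [← hQ z (starRingEnd ℂ z)]
    have e1 : MvPolynomial.eval ![z, z * starRingEnd ℂ z] pf
        = f z (z * starRingEnd ℂ z) := (hpf _ _).symm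
    have e2 : MvPolynomial.eval ![starRingEnd ℂ z, z * starRingEnd ℂ z] pfc
        = starRingEnd ℂ (f z (z * starRingEnd ℂ z)) := by
      have h := repNP_conj f pf hpf (starRingEnd ℂ z) (z * starRingEnd ℂ z)
      rw [← h, map_mul, Complex.conj_conj, mul_comm ((starRingEnd ℂ) z) z]
    simp only [e1, e2, ← hq]
    rw [heq z]
    ring
  -- step 2: transfer to real coordinates
  set Q' : MvPolynomial (Fin 2) ℂ := MvPolynomial.bind₁
      ![MvPolynomial.X 0 + MvPolynomial.C I * MvPolynomial.X 1,
        MvPolynomial.X 0 - MvPolynomial.C I * MvPolynomial.X 1] Q with hQ'def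
  have hQ' : ∀ a b : ℂ, MvPolynomial.eval ![a, b] Q'
      = MvPolynomial.eval ![a + I * b, a - I * b] Q := by
    intro a b
    have hfun : (fun i => MvPolynomial.aeval ![a, b]
        ((![MvPolynomial.X 0 + MvPolynomial.C I * MvPolynomial.X 1,
          MvPolynomial.X 0 - MvPolynomial.C I * MvPolynomial.X 1] :
          Fin 2 → MvPolynomial (Fin 2) ℂ) i)) = ![a + I * b, a - I * b] := by
      funext i
      fin_cases i <;> simp [mv_aeval_eq_eval]
    calc MvPolynomial.eval ![a, b] Q'
        = MvPolynomial.aeval ![a, b] Q' := (mv_aeval_eq_eval _ _).symm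
      _ = MvPolynomial.aeval ![a + I * b, a - I * b] Q := by
          rw [hQ'def, MvPolynomial.aeval_bind₁, hfun]
      _ = MvPolynomial.eval ![a + I * b, a - I * b] Q := mv_aeval_eq_eval _ _
  have hreal : ∀ x y : ℝ, MvPolynomial.eval ![(x : ℂ), (y : ℂ)] Q' = 0 := by
    intro x y
    rw [hQ']
    have hc : (starRingEnd ℂ) ((x : ℂ) + I * y) = (x : ℂ) - I * y := by
      rw [map_add, map_mul, Complex.conj_ofReal, Complex.conj_ofReal, Complex.conj_I]
      ring
    have := h0 ((x : ℂ) + I * y)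
    rwa [hc] at this
  -- step 3: conclude at the point (1, 0)
  have h10 : MvPolynomial.eval ![(1 : ℂ), (0 : ℂ)] Q = 0 := by
    have := vanishNP Q' hreal (1/2) (-(I/2))
    rw [hQ'] at this
    have ha : (1/2 : ℂ) + I * (-(I/2)) = 1 := by
      rw [show (I : ℂ) * (-(I/2)) = -(I*I)/2 by ring, Complex.I_mul_I]; norm_num
    have hb : (1/2 : ℂ) - I * (-(I/2)) = 0 := by
      rw [show (I : ℂ) * (-(I/2)) = -(I*I)/2 by ring, Complex.I_mul_I]; norm_num
    rwa [ha, hb] at this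
  have hmain := (hQ 1 0).trans h10
  beta_reduce at hmain
  have hqz : Polynomial.eval ((1 : ℂ) * 0) q = 0 := by
    rw [show (1 : ℂ) * 0 = 0 by ring, ← hq]
    exact hg0
  have hpfc0 : MvPolynomial.eval ![(0 : ℂ), (1 : ℂ) * 0] pfc = 0 := by
    rw [show (1 : ℂ) * 0 = 0 by ring, ← repNP_conj f pf hpf 0 0]
    simp only [map_zero]
    rw [hf0, map_zero]
  have hsum : (∑ α ∈ range (d + 1), ∑ β ∈ range (d + 1),
      p α β * (1 : ℂ) ^ α * (0 : ℂ) ^ β) = 0 := by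
    refine Finset.sum_eq_zero fun α _ => ?_
    rw [Finset.sum_eq_single 0]
    · simp [hp]
    · intro b _ hb; simp [zero_pow hb]
    · intro h0'; exact absurd (Finset.mem_range.2 (Nat.succ_pos d)) h0'
  rw [hqz, hpfc0, hsum] at hmain
  simpa using hmain
end
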